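/- (Per-step guarantee in the proof of Theorem 2.) Let T : S → A → S be a shared transition function and R_i : S → A → ℝ, i ∈ I, reward functions forming a family of deterministic MDPs with shared transitions, let D be a probability mass function on I, let H ≥ 1, and let the policy π* : S → A be α-optimal everywhere. Fix a state s ∈ S, h < H, and real numbers Q̄_a for a ∈ A such that: (i) |Q̄_a − E_{i~D}[R_i(s,a) + V*_i(h, T(s,a))]| ≤ β + ε/(2H) for every a ∈ A; (ii) Q̄_{π*(s)} ≥ Q̄_a − α − β for every a ∈ A. Then every â ∈ A attaining the maximum of a ↦ Q̄_a over A satisfies E_{i~D}[R_i(s,â) + V_i(π*, h, T(s,â))] ≥ E_{i~D}[V_i(π*, h+1, s)] − ε/H − 2α − 3β. -/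

import Mathlib

open scoped BigOperators

/-- The `h`-step value of a stationary deterministic policy `π` in the deterministic MDP
with transition function `T` and reward function `R`. -/
noncomputable def detVal {S A : Type*} (T : S → A → S) (R : S → A → ℝ)
    (π : S → A) : ℕ → S → ℝ
  | 0, _ => 0
  | h + 1, s => R s (π s) + detVal T R π h (T s (π s))

/-- The `h`-step optimal value in the deterministic MDP `(T, R)`. -/
noncomputable def detOptVal {S A : Type*} [Fintype A] [Nonempty A]
    (T : S → A → S) (R : S → A → ℝ) : ℕ → S → ℝ
  | 0, _ => 0
  | h + 1, s => ⨆ a : A, (R s a + detOptVal T R h (T s a))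

/-- Expectation of `f : I → ℝ` under the probability mass function `D` on the finite type
`I`: `E_{i~D}[f(i)] = Σ_i D(i)·f(i)`. -/
noncomputable def expectD {I : Type*} [Fintype I] (D : PMF I) (f : I → ℝ) : ℝ :=
  ∑ i : I, (D i).toReal * f i

/-! Compare everything with the optimal Q-value `Q a = E[R_i(s,a) + V*_i(h, T(s,a))]`.
Following `πstar` after `ahat` loses at most `α` against `Q ahat`; as `ahat` maximizes the
estimate `Qbar`, `Q ahat ≥ Q (πstar s) - 2 (β + ε/(2H))`; and `Q (πstar s)` dominates the
value of `πstar` at `s` because `V ≤ V*`. -/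

section DeterministicMDP

variable {S A : Type*} (T : S → A → S) (R : S → A → ℝ)

theorem detVal_zero (π : S → A) (s : S) : detVal T R π 0 s = 0 := rfl

theorem detVal_succ (π : S → A) (h : ℕ) (s : S) :
    detVal T R π (h + 1) s = R s (π s) + detVal T R π h (T s (π s)) := rfl

variable [Fintype A] [Nonempty A]

theorem detOptVal_zero (s : S) : detOptVal T R 0 s = 0 := rfl

theorem add_detOptVal_le_detOptVal_succ (h : ℕ) (s : S) (a : A) :
    R s a + detOptVal T R h (T s a) ≤ detOptVal T R (h + 1) s :=
  le_ciSup (Finite.bddAbove_range fun a => R s a + detOptVal T R h (T s a)) a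

theorem detVal_le_detOptVal (π : S → A) (h : ℕ) (s : S) :
    detVal T R π h s ≤ detOptVal T R h s := by
  induction h generalizing s with
  | zero => rw [detVal_zero, detOptVal_zero]
  | succ h ih =>
    calc detVal T R π (h + 1) s = R s (π s) + detVal T R π h (T s (π s)) := detVal_succ ..
      _ ≤ R s (π s) + detOptVal T R h (T s (π s)) := add_le_add_right (ih _) _
      _ ≤ detOptVal T R (h + 1) s := add_detOptVal_le_detOptVal_succ ..

theorem detVal_succ_le_add_detOptVal (π : S → A) (h : ℕ) (s : S) :
    detVal T R π (h + 1) s ≤ R s (π s) + detOptVal T R h (T s (π s)) := by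
  rw [detVal_succ]
  exact add_le_add_right (detVal_le_detOptVal T R π h _) _

end DeterministicMDP

theorem PMF.sum_toReal_eq_one {I : Type*} [Fintype I] (D : PMF I) :
    ∑ i, (D i).toReal = 1 := by
  rw [← ENNReal.toReal_sum fun i _ => D.apply_ne_top i, ← tsum_fintype (L := .unconditional I),
    D.tsum_coe, ENNReal.toReal_one]

section Expectation

variable {I : Type*} [Fintype I] (D : PMF I)

theorem expectD_mono {f g : I → ℝ} (hfg : ∀ i, f i ≤ g i) : expectD D f ≤ expectD D g :=
  Finset.sum_le_sum fun i _ => mul_le_mul_of_nonneg_left (hfg i) ENNReal.toReal_nonneg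

theorem expectD_sub_const (f : I → ℝ) (c : ℝ) :
    expectD D (fun i => f i - c) = expectD D f - c := by
  simp only [expectD, mul_sub, Finset.sum_sub_distrib, ← Finset.sum_mul,
    D.sum_toReal_eq_one, one_mul]

end Expectation

theorem le_add_two_mul_of_abs_sub_le {α : Type*} {f g : α → ℝ} {a b : α} {δ : ℝ}
    (ha : |f a - g a| ≤ δ) (hb : |f b - g b| ≤ δ) (hab : f a ≤ f b) :
    g a ≤ g b + 2 * δ := by
  linarith [abs_le.mp ha, abs_le.mp hb]

theorem per_step_guarantee_general
    {S A I : Type*} [Fintype A] [Nonempty A] [Fintype I]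
    (T : S → A → S) (R : I → S → A → ℝ)
    (D : PMF I)
    (H : ℕ)
    (α β : ℝ) (hα : 0 ≤ α) (hβ : 0 ≤ β) (ε : ℝ)
    (πstar : S → A)
    (hopt : ∀ i : I, ∀ s : S, ∀ h : ℕ, h ≤ H →
      detVal T (R i) πstar h s ≥ detOptVal T (R i) h s - α)
    (s : S) (h : ℕ) (hh : h < H)
    (Qbar : A → ℝ)
    (hQacc : ∀ a : A,
      |Qbar a - expectD D (fun i => R i s a + detOptVal T (R i) h (T s a))| ≤
        β + ε / (2 * H)) :
    ∀ ahat : A, (∀ a : A, Qbar a ≤ Qbar ahat) →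
      expectD D (fun i => R i s ahat + detVal T (R i) πstar h (T s ahat)) ≥
        expectD D (fun i => detVal T (R i) πstar (h + 1) s) -
          ε / H - 2 * α - 3 * β := by
  intro ahat hmax
  set Q : A → ℝ := fun a => expectD D fun i => R i s a + detOptVal T (R i) h (T s a)
  have hfollow : Q ahat - α ≤
      expectD D (fun i => R i s ahat + detVal T (R i) πstar h (T s ahat)) := by
    rw [← expectD_sub_const]
    exact expectD_mono D fun i => by linarith [hopt i (T s ahat) h hh.le]
  have hgreedy : Q (πstar s) ≤ Q ahat + 2 * (β + ε / (2 * H)) :=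
    le_add_two_mul_of_abs_sub_le (hQacc _) (hQacc ahat) (hmax _)
  have hbellman : expectD D (fun i => detVal T (R i) πstar (h + 1) s) ≤ Q (πstar s) :=
    expectD_mono D fun i => detVal_succ_le_add_detOptVal T (R i) πstar h s
  have hhalves : 2 * (ε / (2 * H)) = ε / H := by ring
  linarith

/-- **Per-step guarantee in the proof of Theorem 2.**  If the estimates `Q̄_a` are within
`β + ε/(2H)` of the expected optimal Q-values and `Q̄_{π*(s)} ≥ Q̄_a − α − β` for all `a`,
then any maximizer `â` of `Q̄` satisfies
`E[R_i(s,â) + V_i(π*, h, T(s,â))] ≥ E[V_i(π*, h+1, s)] − ε/H − 2α − 3β`. -/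
theorem per_step_guarantee
    {S A I : Type*} [Fintype S] [Nonempty S] [Fintype A] [Nonempty A] [Fintype I]
    (T : S → A → S) (R : I → S → A → ℝ)
    (D : PMF I)
    (H : ℕ) (hH : 1 ≤ H)
    (α β : ℝ) (hα : 0 ≤ α) (hβ : 0 ≤ β) (ε : ℝ) (hε : 0 < ε)
    (πstar : S → A)
    (hopt : ∀ i : I, ∀ s : S, ∀ h : ℕ, h ≤ H →
      detVal T (R i) πstar h s ≥ detOptVal T (R i) h s - α)
    (s : S) (h : ℕ) (hh : h < H)
    (Qbar : A → ℝ)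
    (hQacc : ∀ a : A,
      |Qbar a - expectD D (fun i => R i s a + detOptVal T (R i) h (T s a))| ≤
        β + ε / (2 * H))
    (hQstar : ∀ a : A, Qbar (πstar s) ≥ Qbar a - α - β) :
    ∀ ahat : A, (∀ a : A, Qbar a ≤ Qbar ahat) →
      expectD D (fun i => R i s ahat + detVal T (R i) πstar h (T s ahat)) ≥
        expectD D (fun i => detVal T (R i) πstar (h + 1) s) -
          ε / H - 2 * α - 3 * β :=
  per_step_guarantee_general T R D H α β hα hβ ε πstar hopt s h hh Qbar hQacc
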